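/- arXiv:1912.04343 — 5 statements merged into one kernel-verified Lean document; each statement's English description precedes it below -/
import Mathlib

section
/- Let ρ ≥ 0 and let S ⊂ Γ be a uniform subset of Sup(ρ). Then for each τ with 0 < τ < 1/ρ there exists n ∈ ℕ such that S ⊂ Sad(n,τ). Analogously, if S is a uniform subset of Sdn(ρ), then for each τ > 1/ρ there exists n ∈ ℕ such that S ⊂ Srad(n,τ). -/
/-! Take `ε` with `ρ ± ε = 1/τ`, and let `T` be the uniform time given by `ε`. A window
`(s, t]` of length at least `T` then holds at most (resp. at least) `(t - s)/τ` impulses.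
A shorter window holds no more impulses than `(s, s + T]`, hence at most `T/τ`, and trivially
at least `0 ≥ (t - s)/τ - T/τ`; so `n = ⌈T/τ⌉` works uniformly in `γ ∈ S`. -/

open Set Filter MeasureTheory

noncomputable section

/-- An impulse-time sequence, modeled as a subset of `(0,∞)` whose intersection with any
half-line `(-∞, t]` is finite (equivalently: a strictly increasing, finite or infinite,
sequence of positive reals with no finite limit point). -/
def IsImpulseSeq (γ : Set ℝ) : Prop :=
  γ ⊆ Set.Ioi (0 : ℝ) ∧ ∀ t : ℝ, (γ ∩ Set.Iic t).Finite

/-- `impCnt γ s t` is the number `n^γ_{(s,t]}` of impulse times in the interval `(s, t]`. -/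
def impCnt (γ : Set ℝ) (s t : ℝ) : ℕ := (γ ∩ Set.Ioc s t).ncard

/-- The class `Sup(ρ)` of impulse-time sequences whose impulse frequency is eventually
uniformly upper bounded by `ρ`. -/
def MemSup (ρ : ℝ) (γ : Set ℝ) : Prop :=
  IsImpulseSeq γ ∧ ∀ ε : ℝ, 0 < ε → ∃ T : ℝ, 0 < T ∧
    ∀ t : ℝ, T ≤ t → ∀ s : ℝ, 0 ≤ s → (impCnt γ s (s + t) : ℝ) / t ≤ ρ + ε

/-- The class `Sdn(ρ)` of impulse-time sequences whose impulse frequency is eventually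
uniformly lower bounded by `ρ`. -/
def MemSdn (ρ : ℝ) (γ : Set ℝ) : Prop :=
  IsImpulseSeq γ ∧ ∀ ε : ℝ, 0 < ε → ∃ T : ℝ, 0 < T ∧
    ∀ t : ℝ, T ≤ t → ∀ s : ℝ, 0 ≤ s → ρ - ε ≤ (impCnt γ s (s + t) : ℝ) / t

/-- `S` is a uniform subset of `Sup(ρ)`: the time `T` can be chosen independently of `γ ∈ S`. -/
def USubSup (ρ : ℝ) (S : Set (Set ℝ)) : Prop :=
  (∀ γ ∈ S, IsImpulseSeq γ) ∧ ∀ ε : ℝ, 0 < ε → ∃ T : ℝ, 0 < T ∧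
    ∀ γ ∈ S, ∀ t : ℝ, T ≤ t → ∀ s : ℝ, 0 ≤ s → (impCnt γ s (s + t) : ℝ) / t ≤ ρ + ε

/-- `S` is a uniform subset of `Sdn(ρ)`: the time `T` can be chosen independently of `γ ∈ S`. -/
def USubSdn (ρ : ℝ) (S : Set (Set ℝ)) : Prop :=
  (∀ γ ∈ S, IsImpulseSeq γ) ∧ ∀ ε : ℝ, 0 < ε → ∃ T : ℝ, 0 < T ∧
    ∀ γ ∈ S, ∀ t : ℝ, T ≤ t → ∀ s : ℝ, 0 ≤ s → ρ - ε ≤ (impCnt γ s (s + t) : ℝ) / t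

/-- The average dwell-time class `Sad(n, τ)`. -/
def MemSad (n : ℕ) (τ : ℝ) (γ : Set ℝ) : Prop :=
  IsImpulseSeq γ ∧ ∀ s t : ℝ, 0 ≤ s → s ≤ t → (impCnt γ s t : ℝ) ≤ (n : ℝ) + (t - s) / τ

/-- The reverse average dwell-time class `Srad(n, τ)`. -/
def MemSrad (n : ℕ) (τ : ℝ) (γ : Set ℝ) : Prop :=
  IsImpulseSeq γ ∧ ∀ s t : ℝ, 0 ≤ s → s ≤ t → -(n : ℝ) + (t - s) / τ ≤ (impCnt γ s t : ℝ)

lemma impCnt_mono_right {γ : Set ℝ} {s t t' : ℝ} (hfin : (γ ∩ Iic t').Finite) (htt' : t ≤ t') :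
    impCnt γ s t ≤ impCnt γ s t' :=
  ncard_le_ncard (inter_subset_inter_right _ (Ioc_subset_Ioc_right htt'))
    (hfin.subset (inter_subset_inter_right _ fun _ hx => hx.2))

lemma memSad_ceil_of_impCnt_div_le {γ : Set ℝ} {τ T : ℝ} (hγ : IsImpulseSeq γ) (hτ : 0 ≤ τ)
    (hT : 0 < T) (hcount : ∀ t, T ≤ t → ∀ s, 0 ≤ s → (impCnt γ s (s + t) : ℝ) / t ≤ τ⁻¹) :
    MemSad ⌈T / τ⌉₊ τ γ := by
  refine ⟨hγ, fun s t hs hst => ?_⟩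
  have hceil : T / τ ≤ ⌈T / τ⌉₊ := Nat.le_ceil _
  rcases le_or_gt T (t - s) with hlong | hshort
  · have hfreq := hcount (t - s) hlong s hs
    rw [add_sub_cancel, div_le_iff₀ (hT.trans_le hlong), ← div_eq_inv_mul] at hfreq
    linarith [div_nonneg hT.le hτ]
  · have hmono : (impCnt γ s t : ℝ) ≤ impCnt γ s (s + T) := by
      exact_mod_cast impCnt_mono_right (hγ.2 _) (by linarith)
    have hfreq := hcount T le_rfl s hs
    rw [div_le_iff₀ hT, ← div_eq_inv_mul] at hfreq
    linarith [div_nonneg (sub_nonneg.2 hst) hτ]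

lemma memSrad_ceil_of_le_impCnt_div {γ : Set ℝ} {τ T : ℝ} (hγ : IsImpulseSeq γ) (hτ : 0 ≤ τ)
    (hT : 0 < T) (hcount : ∀ t, T ≤ t → ∀ s, 0 ≤ s → τ⁻¹ ≤ (impCnt γ s (s + t) : ℝ) / t) :
    MemSrad ⌈T / τ⌉₊ τ γ := by
  refine ⟨hγ, fun s t hs hst => ?_⟩
  have hceil : T / τ ≤ ⌈T / τ⌉₊ := Nat.le_ceil _
  rcases le_or_gt T (t - s) with hlong | hshort
  · have hfreq := hcount (t - s) hlong s hs
    rw [add_sub_cancel, le_div_iff₀ (hT.trans_le hlong), ← div_eq_inv_mul] at hfreq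
    linarith
  · have hshort' : (t - s) / τ ≤ T / τ := div_le_div_of_nonneg_right hshort.le hτ
    linarith [(impCnt γ s t).cast_nonneg (α := ℝ)]

theorem usubset_sup_subset_sad_general (ρ : ℝ) (S : Set (Set ℝ)) :
    (USubSup ρ S → ∀ τ : ℝ, 0 < τ → ρ * τ < 1 → ∃ n : ℕ, ∀ γ ∈ S, MemSad n τ γ) ∧
    (USubSdn ρ S → ∀ τ : ℝ, 0 < τ → 1 < ρ * τ → ∃ n : ℕ, ∀ γ ∈ S, MemSrad n τ γ) := by
  constructor
  · rintro ⟨hImp, hU⟩ τ hτ hρτ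
    have hε : 0 < τ⁻¹ - ρ := sub_pos.2 (by rwa [← one_div, lt_div_iff₀ hτ])
    obtain ⟨T, hT, hcount⟩ := hU _ hε
    refine ⟨⌈T / τ⌉₊, fun γ hγ => memSad_ceil_of_impCnt_div_le (hImp γ hγ) hτ.le hT ?_⟩
    simpa only [add_sub_cancel] using hcount γ hγ
  · rintro ⟨hImp, hU⟩ τ hτ hρτ
    have hε : 0 < ρ - τ⁻¹ := sub_pos.2 ((inv_lt_iff_one_lt_mul₀ hτ).2 hρτ)
    obtain ⟨T, hT, hcount⟩ := hU _ hε
    refine ⟨⌈T / τ⌉₊, fun γ hγ => memSrad_ceil_of_le_impCnt_div (hImp γ hγ) hτ.le hT ?_⟩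
    simpa only [sub_sub_cancel] using hcount γ hγ

/-- Lemma 1 ii): if `S` is a uniform subset of `Sup(ρ)` then for each `τ` with `0 < τ < 1/ρ`
(equivalently `ρ·τ < 1`) there is `n ∈ ℕ` with `S ⊆ Sad(n,τ)`; analogously, if `S` is a
uniform subset of `Sdn(ρ)` then for each `τ > 1/ρ` (equivalently `ρ·τ > 1`) there is `n ∈ ℕ`
with `S ⊆ Srad(n,τ)`. -/
theorem usubset_sup_subset_sad (ρ : ℝ) (hρ : 0 ≤ ρ) (S : Set (Set ℝ)) :
    (USubSup ρ S → ∀ τ : ℝ, 0 < τ → ρ * τ < 1 → ∃ n : ℕ, ∀ γ ∈ S, MemSad n τ γ) ∧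
    (USubSdn ρ S → ∀ τ : ℝ, 0 < τ → 1 < ρ * τ → ∃ n : ℕ, ∀ γ ∈ S, MemSrad n τ γ) :=
  usubset_sup_subset_sad_general ρ S
end
end

section
/- Let ρ ≥ 0 and Δ ≥ 0. If γ ∈ Sup(ρ) and γ* is a Δ-perturbation of γ, then γ* ∈ Sup(ρ). Analogously, if γ ∈ Sdn(ρ) and γ* is a Δ-perturbation of γ, then γ* ∈ Sdn(ρ). -/
open Set Filter

noncomputable section

/-- An (infinite) impulse-time sequence: strictly increasing, positive, with no finite
limit point (i.e. tending to `∞`). -/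
def IsImpSeqFun (τ : ℕ → ℝ) : Prop :=
  StrictMono τ ∧ 0 < τ 0 ∧ Filter.Tendsto τ Filter.atTop Filter.atTop

/-- `seqCnt τ s t` is the number `n^γ_{(s,t]}` of terms of the sequence `τ` lying in `(s, t]`. -/
def seqCnt (τ : ℕ → ℝ) (s t : ℝ) : ℕ := (Set.range τ ∩ Set.Ioc s t).ncard

/-- Membership in the class `Sup(ρ)` (impulse frequency eventually uniformly upper bounded
by `ρ`), for sequences. -/
def SeqMemSup (ρ : ℝ) (τ : ℕ → ℝ) : Prop :=
  IsImpSeqFun τ ∧ ∀ ε : ℝ, 0 < ε → ∃ T : ℝ, 0 < T ∧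
    ∀ t : ℝ, T ≤ t → ∀ s : ℝ, 0 ≤ s → (seqCnt τ s (s + t) : ℝ) / t ≤ ρ + ε

/-- Membership in the class `Sdn(ρ)` (impulse frequency eventually uniformly lower bounded
by `ρ`), for sequences. -/
def SeqMemSdn (ρ : ℝ) (τ : ℕ → ℝ) : Prop :=
  IsImpSeqFun τ ∧ ∀ ε : ℝ, 0 < ε → ∃ T : ℝ, 0 < T ∧
    ∀ t : ℝ, T ≤ t → ∀ s : ℝ, 0 ≤ s → ρ - ε ≤ (seqCnt τ s (s + t) : ℝ) / t

/-- Membership in the average dwell-time class `Sad(n, τADT)`. -/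
def SeqMemSad (n : ℕ) (τADT : ℝ) (τ : ℕ → ℝ) : Prop :=
  IsImpSeqFun τ ∧ ∀ s t : ℝ, 0 ≤ s → s ≤ t → (seqCnt τ s t : ℝ) ≤ (n : ℝ) + (t - s) / τADT

/-- Membership in the reverse average dwell-time class `Srad(n, τADT)`. -/
def SeqMemSrad (n : ℕ) (τADT : ℝ) (τ : ℕ → ℝ) : Prop :=
  IsImpSeqFun τ ∧ ∀ s t : ℝ, 0 ≤ s → s ≤ t → -(n : ℝ) + (t - s) / τADT ≤ (seqCnt τ s t : ℝ)

/-- `τs` is a `Δ`-perturbation of `τ`: with the same index set, `τs k ∈ [τ k − Δ, τ k + Δ]`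
for all `k`. -/
def IsDeltaPert (Δ : ℝ) (τ τs : ℕ → ℝ) : Prop :=
  ∀ k : ℕ, τ k - Δ ≤ τs k ∧ τs k ≤ τ k + Δ

/-!
A `Δ`-perturbation moves every impulse by at most `Δ`, so any window `(s, s + t]` of `γ*` is
sandwiched between windows of `γ` of lengths `t - 2Δ` and `t + 2Δ` (for the longer one,
positivity of the impulse times lets the window start at a nonnegative time). The frequency bound
of `γ` therefore controls the count of `γ*` up to the additive constant `2Δ(ρ ± ε)`, which is
negligible against `t` as `t → ∞`.
-/

lemma IsImpSeqFun.pos {τ : ℕ → ℝ} (hτ : IsImpSeqFun τ) (k : ℕ) : 0 < τ k :=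
  hτ.2.1.trans_le (hτ.1.monotone k.zero_le)

lemma seqCnt_eq_ncard_preimage {τ : ℕ → ℝ} (hτ : Function.Injective τ) (s t : ℝ) :
    seqCnt τ s t = (τ ⁻¹' Ioc s t).ncard := by
  rw [seqCnt, inter_comm, ← image_preimage_eq_inter_range, ncard_image_of_injective _ hτ]

lemma finite_preimage_Ioc {τ : ℕ → ℝ} (hτ : Tendsto τ atTop atTop) (s t : ℝ) :
    (τ ⁻¹' Ioc s t).Finite := by
  have hlarge : ∀ᶠ k in cofinite, t < τ k :=
    Nat.cofinite_eq_atTop ▸ hτ.eventually (eventually_gt_atTop t)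
  exact hlarge.subset fun k hk => not_lt.2 hk.2

lemma seqCnt_le_seqCnt {τ σ : ℕ → ℝ} {a b c d : ℝ} (hτ : Function.Injective τ)
    (hσ : Function.Injective σ) (hσ_top : Tendsto σ atTop atTop)
    (h : ∀ k, τ k ∈ Ioc a b → σ k ∈ Ioc c d) : seqCnt τ a b ≤ seqCnt σ c d := by
  rw [seqCnt_eq_ncard_preimage hτ, seqCnt_eq_ncard_preimage hσ]
  exact ncard_le_ncard (fun k => h k) (finite_preimage_Ioc hσ_top c d)

lemma seqMemSup_of_seqCnt_le_add {ρ : ℝ} {τ : ℕ → ℝ} (hτ : IsImpSeqFun τ)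
    (h : ∀ ε > 0, ∃ T C : ℝ, ∀ t ≥ T, ∀ s ≥ 0, (seqCnt τ s (s + t) : ℝ) ≤ (ρ + ε) * t + C) :
    SeqMemSup ρ τ := by
  refine ⟨hτ, fun ε hε => ?_⟩
  obtain ⟨T, C, hT⟩ := h (ε / 2) (half_pos hε)
  refine ⟨max 1 (max T (2 * C / ε)), lt_max_of_lt_left one_pos, fun t ht s hs => ?_⟩
  simp only [max_le_iff] at ht
  obtain ⟨ht_one, ht_T, ht_C⟩ := ht
  have hC : C ≤ ε / 2 * t := by
    rw [div_le_iff₀ hε] at ht_C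
    linarith
  rw [div_le_iff₀ (by linarith)]
  linarith [hT t ht_T s hs]

lemma seqMemSdn_of_sub_le_seqCnt {ρ : ℝ} {τ : ℕ → ℝ} (hτ : IsImpSeqFun τ)
    (h : ∀ ε > 0, ∃ T C : ℝ, ∀ t ≥ T, ∀ s ≥ 0, (ρ - ε) * t - C ≤ (seqCnt τ s (s + t) : ℝ)) :
    SeqMemSdn ρ τ := by
  refine ⟨hτ, fun ε hε => ?_⟩
  obtain ⟨T, C, hT⟩ := h (ε / 2) (half_pos hε)
  refine ⟨max 1 (max T (2 * C / ε)), lt_max_of_lt_left one_pos, fun t ht s hs => ?_⟩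
  simp only [max_le_iff] at ht
  obtain ⟨ht_one, ht_T, ht_C⟩ := ht
  have hC : C ≤ ε / 2 * t := by
    rw [div_le_iff₀ hε] at ht_C
    linarith
  rw [le_div_iff₀ (by linarith)]
  linarith [hT t ht_T s hs]

section Perturbation

variable {ρ Δ : ℝ} {τ τs : ℕ → ℝ}

theorem SeqMemSup.of_isDeltaPert (h : SeqMemSup ρ τ) (hτs : IsImpSeqFun τs)
    (hpert : IsDeltaPert Δ τ τs) (hΔ : 0 ≤ Δ) : SeqMemSup ρ τs := by
  refine seqMemSup_of_seqCnt_le_add hτs fun ε hε => ?_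
  obtain ⟨T, hT, hbound⟩ := h.2 ε hε
  refine ⟨T, 2 * Δ * (ρ + ε), fun t ht s _ => ?_⟩
  set s' := max (s - Δ) 0
  have hs' : s - Δ ≤ s' := le_max_left _ _
  have hcount : seqCnt τs s (s + t) ≤ seqCnt τ s' (s' + (t + 2 * Δ)) :=
    seqCnt_le_seqCnt hτs.1.injective h.1.1.injective h.1.2.2 fun k hk =>
      ⟨max_lt (by linarith [(hpert k).2, hk.1]) (h.1.pos k), by linarith [(hpert k).1, hk.2]⟩
  have hτ_bound := hbound (t + 2 * Δ) (by linarith) s' (le_max_right _ _)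
  rw [div_le_iff₀ (by linarith)] at hτ_bound
  calc (seqCnt τs s (s + t) : ℝ) ≤ seqCnt τ s' (s' + (t + 2 * Δ)) := by exact_mod_cast hcount
    _ ≤ (ρ + ε) * (t + 2 * Δ) := hτ_bound
    _ = (ρ + ε) * t + 2 * Δ * (ρ + ε) := by ring

theorem SeqMemSdn.of_isDeltaPert (h : SeqMemSdn ρ τ) (hτs : IsImpSeqFun τs)
    (hpert : IsDeltaPert Δ τ τs) (hΔ : 0 ≤ Δ) : SeqMemSdn ρ τs := by
  refine seqMemSdn_of_sub_le_seqCnt hτs fun ε hε => ?_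
  obtain ⟨T, hT, hbound⟩ := h.2 ε hε
  refine ⟨T + 2 * Δ, 2 * Δ * (ρ - ε), fun t ht s hs => ?_⟩
  have hcount : seqCnt τ (s + Δ) (s + Δ + (t - 2 * Δ)) ≤ seqCnt τs s (s + t) :=
    seqCnt_le_seqCnt h.1.1.injective hτs.1.injective hτs.2.2 fun k hk =>
      ⟨by linarith [(hpert k).1, hk.1], by linarith [(hpert k).2, hk.2]⟩
  have hτ_bound := hbound (t - 2 * Δ) (by linarith) (s + Δ) (by linarith)
  rw [le_div_iff₀ (by linarith)] at hτ_bound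
  calc (ρ - ε) * t - 2 * Δ * (ρ - ε) = (ρ - ε) * (t - 2 * Δ) := by ring
    _ ≤ seqCnt τ (s + Δ) (s + Δ + (t - 2 * Δ)) := hτ_bound
    _ ≤ seqCnt τs s (s + t) := by exact_mod_cast hcount

end Perturbation

theorem deltaPert_mem_sup_sdn_general (ρ Δ : ℝ) (hΔ : 0 ≤ Δ)
    (τ τs : ℕ → ℝ) (hτs : IsImpSeqFun τs) (hpert : IsDeltaPert Δ τ τs) :
    (SeqMemSup ρ τ → SeqMemSup ρ τs) ∧ (SeqMemSdn ρ τ → SeqMemSdn ρ τs) :=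
  ⟨fun h => h.of_isDeltaPert hτs hpert hΔ, fun h => h.of_isDeltaPert hτs hpert hΔ⟩

/-- Lemma 1 v-a): `Sup(ρ)` and `Sdn(ρ)` are persistent under `Δ`-perturbations: if
`γ* ∈ Γ` is a `Δ`-perturbation of `γ ∈ Sup(ρ)` (resp. `γ ∈ Sdn(ρ)`), then `γ* ∈ Sup(ρ)`
(resp. `γ* ∈ Sdn(ρ)`). -/
theorem deltaPert_mem_sup_sdn (ρ Δ : ℝ) (hρ : 0 ≤ ρ) (hΔ : 0 ≤ Δ)
    (τ τs : ℕ → ℝ) (hτs : IsImpSeqFun τs) (hpert : IsDeltaPert Δ τ τs) :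
    (SeqMemSup ρ τ → SeqMemSup ρ τs) ∧ (SeqMemSdn ρ τ → SeqMemSdn ρ τs) :=
  deltaPert_mem_sup_sdn_general ρ Δ hΔ τ τs hτs hpert
end
end

section
/- There exists an impulse-time sequence γ ∈ Γ such that limsup_{t→∞} n^γ_{(0,t]}/t ≤ 3/2, yet γ ∉ Sup(ρ) for every ρ > 0. In fact, the concatenation γ of the finite sequences {τ_k^1}_{k=0}^2 with τ_k^1 = 1 + k/2, and for ℓ ≥ 2, {τ_k^ℓ}_{k=0}^{p_ℓ−1} with τ_k^ℓ = 2^ℓ − 1 + k/(p_ℓ − 1) and p_ℓ = 3·2^{ℓ−2}, is a strictly increasing sequence tending to ∞ with this property: for every finite length T > 0 and every N ∈ ℕ there exists s ≥ 0 with n^γ_{(s,s+T]} ≥ N, so γ ∉ Sup(ρ) for any ρ > 0, while limsup_{t→∞} n^γ_{(0,t]}/t ≤ 3/2. -/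
open Set Filter MeasureTheory

noncomputable section

open scoped ENNReal

/-- `p_ℓ = 3·2^(ℓ−2)`, the number of elements of the `ℓ`-th finite block (`ℓ ≥ 2`). -/
def pEx (ℓ : ℕ) : ℕ := 3 * 2 ^ (ℓ - 2)

/-- The `ℓ`-th finite block of Example 1: for `ℓ = 1` the points `1 + k/2`, `k = 0,1,2`;
for `ℓ ≥ 2` the points `2^ℓ − 1 + k/(p_ℓ − 1)`, `k = 0,…,p_ℓ − 1`. -/
def blockEx (ℓ : ℕ) : Set ℝ :=
  if ℓ = 1 then (fun k : ℕ => 1 + (k : ℝ) / 2) '' {k : ℕ | k < 3}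
  else (fun k : ℕ => (2 : ℝ) ^ ℓ - 1 + (k : ℝ) / ((pEx ℓ : ℝ) - 1)) '' {k : ℕ | k < pEx ℓ}

/-- The concatenation `γ` of the blocks, as a set of impulse times. -/
def gammaEx : Set ℝ := ⋃ ℓ ∈ {ℓ : ℕ | 1 ≤ ℓ}, blockEx ℓ

/-!
Block `ℓ` consists of `p_ℓ` equally spaced points filling `[2^ℓ - 1, 2^ℓ]` (also for `ℓ = 1`,
as `p₁ = 3`). Up to time `t < 2^(L+1) - 1` only the blocks `ℓ ≤ L` have started, and these hold
`∑_{ℓ ≤ L} p_ℓ ≤ 3·2^(L-1)` points; choosing `2^L ≤ t + 1` gives `n_{(0,t]} ≤ 3/2 · (t + 1)`.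
On the other hand block `ℓ` packs `p_ℓ` points into an interval of length one, so a window of
fixed length `T` placed at its start catches about `T p_ℓ / 2` of them, which is unbounded in `ℓ`
and rules out any uniform frequency bound.
-/

open scoped NNReal

section ImpulseSeq

variable {γ : Set ℝ}

lemma IsImpulseSeq.finite_inter_Ioc (hγ : IsImpulseSeq γ) (s t : ℝ) :
    (γ ∩ Ioc s t).Finite :=
  (hγ.2 t).subset (inter_subset_inter_right _ Ioc_subset_Iic_self)

lemma IsImpulseSeq.card_le_impCnt (hγ : IsImpulseSeq γ) {s t : ℝ} {A : Finset ℝ}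
    (hA : ↑A ⊆ γ ∩ Ioc s t) : A.card ≤ impCnt γ s t := by
  rw [← ncard_coe_finset]
  exact ncard_le_ncard hA (hγ.finite_inter_Ioc s t)

lemma not_memSup_of_forall_le_impCnt
    (h : ∀ T : ℝ, 0 < T → ∀ N : ℕ, ∃ s : ℝ, 0 ≤ s ∧ N ≤ impCnt γ s (s + T)) (ρ : ℝ) :
    ¬ MemSup ρ γ := by
  rintro ⟨-, hsup⟩
  obtain ⟨T, hT, hbound⟩ := hsup 1 one_pos
  obtain ⟨s, hs, hN⟩ := h T hT (⌈(ρ + 1) * T⌉₊ + 1)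
  have hcnt : (impCnt γ s (s + T) : ℝ) ≤ (ρ + 1) * T :=
    (div_le_iff₀ hT).1 (hbound T le_rfl s hs)
  have hN' : (⌈(ρ + 1) * T⌉₊ + 1 : ℝ) ≤ impCnt γ s (s + T) := by exact_mod_cast hN
  linarith [Nat.le_ceil ((ρ + 1) * T)]

end ImpulseSeq

lemma limsup_natCast_div_ofReal_le {f : ℝ → ℕ} {c : ℝ≥0} {d : ℝ}
    (h : ∀ᶠ t in atTop, (f t : ℝ) ≤ c * t + d) :
    limsup (fun t => (f t : ℝ≥0∞) / ENNReal.ofReal t) atTop ≤ c := by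
  refine ENNReal.le_of_forall_pos_le_add fun ε hε _ => limsup_le_of_le (by isBoundedDefault) ?_
  filter_upwards [h, eventually_gt_atTop 0, eventually_ge_atTop (d / ε)] with t hft ht hdt
  have hd : d ≤ ε * t := by rwa [div_le_iff₀' (by exact_mod_cast hε)] at hdt
  rw [ENNReal.div_le_iff (by simpa using ht) ENNReal.ofReal_ne_top]
  calc (f t : ℝ≥0∞) = ENNReal.ofReal (f t) := (ENNReal.ofReal_natCast _).symm
    _ ≤ ENNReal.ofReal ((c + ε : ℝ≥0) * t) := ENNReal.ofReal_le_ofReal (by push_cast; linarith)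
    _ = (c + ε) * ENNReal.ofReal t := by
      rw [ENNReal.ofReal_mul (by positivity), ENNReal.ofReal_coe_nnreal, ENNReal.coe_add]

lemma pEx_add_two (M : ℕ) : pEx (M + 2) = 3 * 2 ^ M := rfl

lemma three_le_pEx (ℓ : ℕ) : 3 ≤ pEx ℓ := Nat.le_mul_of_pos_right 3 (Nat.pow_pos two_pos)

lemma two_mul_sum_pEx_le (L : ℕ) : 2 * ∑ ℓ ∈ Finset.Icc 1 L, pEx ℓ ≤ 3 * 2 ^ L := by
  induction L with
  | zero => simp
  | succ L ih =>
    rw [Finset.sum_Icc_succ_top (Nat.le_add_left 1 L), mul_add]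
    rcases L with _ | M
    · simp [pEx]
    · rw [pEx_add_two, pow_succ 2 (M + 1), pow_succ 2 M] at *
      omega

def blockPt (ℓ k : ℕ) : ℝ := 2 ^ ℓ - 1 + k / (pEx ℓ - 1)

lemma blockEx_eq_image (ℓ : ℕ) : blockEx ℓ = blockPt ℓ '' Iio (pEx ℓ) := by
  unfold blockEx blockPt
  split_ifs with h
  · subst h; norm_num [pEx]; rfl
  · rfl

lemma blockPt_strictMono (ℓ : ℕ) : StrictMono (blockPt ℓ) := by
  have hp : (3 : ℝ) ≤ pEx ℓ := by exact_mod_cast three_le_pEx ℓ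
  intro a b hab
  unfold blockPt
  gcongr
  linarith

lemma blockPt_mem_Icc {ℓ k : ℕ} (hk : k < pEx ℓ) :
    blockPt ℓ k ∈ Icc ((2 : ℝ) ^ ℓ - 1) (2 ^ ℓ) := by
  have hp : (3 : ℝ) ≤ pEx ℓ := by exact_mod_cast three_le_pEx ℓ
  have hk' : (k : ℝ) ≤ pEx ℓ - 1 := by
    rw [le_sub_iff_add_le]; exact_mod_cast hk
  have hfrac : (k : ℝ) / (pEx ℓ - 1) ≤ 1 := (div_le_one (by linarith)).2 hk'
  constructor <;> unfold blockPt
  · have : 0 ≤ (k : ℝ) / (pEx ℓ - 1) := div_nonneg k.cast_nonneg (by linarith)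
    linarith
  · linarith

lemma blockPt_le_of_two_mul_le {ℓ k : ℕ} {T : ℝ} (h : 2 * (k : ℝ) ≤ T * (pEx ℓ - 1)) :
    blockPt ℓ k ≤ 2 ^ ℓ - 1 + T / 2 := by
  have hp : (3 : ℝ) ≤ pEx ℓ := by exact_mod_cast three_le_pEx ℓ
  have hfrac : (k : ℝ) / (pEx ℓ - 1) ≤ T / 2 := by
    rw [div_le_iff₀ (by linarith)]
    linarith
  unfold blockPt
  linarith

lemma blockPt_mem_gammaEx {ℓ k : ℕ} (hℓ : 1 ≤ ℓ) (hk : k < pEx ℓ) : blockPt ℓ k ∈ gammaEx :=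
  mem_biUnion hℓ (by rw [blockEx_eq_image]; exact mem_image_of_mem _ hk)

def blockFinset (ℓ : ℕ) : Finset ℝ := (Finset.range (pEx ℓ)).image (blockPt ℓ)

lemma coe_blockFinset (ℓ : ℕ) : (blockFinset ℓ : Set ℝ) = blockEx ℓ := by
  simp [blockFinset, blockEx_eq_image]

lemma card_blockFinset (ℓ : ℕ) : (blockFinset ℓ).card = pEx ℓ := by
  rw [blockFinset, Finset.card_image_of_injective _ (blockPt_strictMono ℓ).injective,
    Finset.card_range]

lemma mem_blockEx_Icc {ℓ : ℕ} {x : ℝ} (hx : x ∈ blockEx ℓ) :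
    x ∈ Icc ((2 : ℝ) ^ ℓ - 1) (2 ^ ℓ) := by
  rw [blockEx_eq_image] at hx
  obtain ⟨k, hk, rfl⟩ := hx
  exact blockPt_mem_Icc hk

lemma gammaEx_inter_Iic_subset {t : ℝ} {L : ℕ} (ht : t < 2 ^ (L + 1) - 1) :
    gammaEx ∩ Iic t ⊆ ↑((Finset.Icc 1 L).biUnion blockFinset) := by
  rintro x ⟨hx, hxt⟩
  simp only [gammaEx, mem_iUnion₂] at hx
  obtain ⟨ℓ, hℓ, hxℓ⟩ := hx
  have hℓL : ℓ ≤ L := by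
    by_contra! hLℓ
    have : (2 : ℝ) ^ (L + 1) ≤ 2 ^ ℓ := pow_le_pow_right₀ one_le_two hLℓ
    linarith [(mem_blockEx_Icc hxℓ).1, mem_Iic.1 hxt]
  simp only [Finset.coe_biUnion, Finset.coe_Icc, mem_iUnion₂, coe_blockFinset]
  exact ⟨ℓ, ⟨hℓ, hℓL⟩, hxℓ⟩

lemma finite_gammaEx_inter_Iic (t : ℝ) : (gammaEx ∩ Iic t).Finite := by
  obtain ⟨L, hL⟩ := pow_unbounded_of_one_lt (t + 1) (one_lt_two : (1 : ℝ) < 2)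
  refine (Finset.finite_toSet _).subset (gammaEx_inter_Iic_subset (L := L) ?_)
  rw [pow_succ]
  linarith [pow_pos (two_pos : (0 : ℝ) < 2) L]

lemma isImpulseSeq_gammaEx : IsImpulseSeq gammaEx := by
  refine ⟨fun x hx => ?_, finite_gammaEx_inter_Iic⟩
  simp only [gammaEx, mem_iUnion₂] at hx
  obtain ⟨ℓ, hℓ, hxℓ⟩ := hx
  have : (2 : ℝ) ≤ 2 ^ ℓ := le_self_pow₀ one_le_two (Nat.one_le_iff_ne_zero.1 hℓ)
  exact mem_Ioi.2 (by linarith [(mem_blockEx_Icc hxℓ).1])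

lemma impCnt_gammaEx_zero_le {t : ℝ} (ht : 0 ≤ t) :
    (impCnt gammaEx 0 t : ℝ) ≤ 3 / 2 * t + 3 / 2 := by
  obtain ⟨L, hLt, htL⟩ := exists_nat_pow_near (by linarith : (1 : ℝ) ≤ t + 1) one_lt_two
  have hcard : impCnt gammaEx 0 t ≤ ∑ ℓ ∈ Finset.Icc 1 L, pEx ℓ := calc
    impCnt gammaEx 0 t ≤ ((Finset.Icc 1 L).biUnion blockFinset).card := by
      rw [← ncard_coe_finset]
      refine ncard_le_ncard ?_ (Finset.finite_toSet _)
      exact (inter_subset_inter_right _ Ioc_subset_Iic_self).trans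
        (gammaEx_inter_Iic_subset (by linarith))
    _ ≤ ∑ ℓ ∈ Finset.Icc 1 L, pEx ℓ :=
      Finset.card_biUnion_le.trans_eq (Finset.sum_congr rfl fun ℓ _ => card_blockFinset ℓ)
  have hnat : 2 * impCnt gammaEx 0 t ≤ 3 * 2 ^ L := by linarith [two_mul_sum_pEx_le L]
  have hreal : 2 * (impCnt gammaEx 0 t : ℝ) ≤ 3 * 2 ^ L := by exact_mod_cast hnat
  linarith

lemma exists_le_impCnt_gammaEx {T : ℝ} (hT : 0 < T) (N : ℕ) :
    ∃ s : ℝ, 0 ≤ s ∧ N ≤ impCnt gammaEx s (s + T) := by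
  obtain ⟨M, hM⟩ := pow_unbounded_of_one_lt (N + 2 * N / T + T) (one_lt_two : (1 : ℝ) < 2)
  set ℓ := M + 2
  have hp : (pEx ℓ : ℝ) = 3 * 2 ^ M := by exact_mod_cast pEx_add_two M
  have h2ℓ : (2 : ℝ) ^ ℓ = 4 * 2 ^ M := by rw [pow_add]; ring
  have hM1 : (1 : ℝ) ≤ 2 ^ M := one_le_pow₀ one_le_two
  have hNT : 0 ≤ 2 * (N : ℝ) / T := by positivity
  have hNp : 2 * (N : ℝ) ≤ T * (pEx ℓ - 1) := by
    rw [← div_le_iff₀' hT]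
    linarith
  have hNp' : N < pEx ℓ := by
    have : (N : ℝ) < pEx ℓ := by linarith
    exact_mod_cast this
  refine ⟨2 ^ ℓ - 1 - T / 2, by linarith, ?_⟩
  have hsub : ↑((Finset.range N).image (blockPt ℓ)) ⊆
      gammaEx ∩ Ioc (2 ^ ℓ - 1 - T / 2) (2 ^ ℓ - 1 - T / 2 + T) := by
    intro x hx
    simp only [Finset.coe_image, Finset.coe_range, mem_image, mem_Iio] at hx
    obtain ⟨k, hk, rfl⟩ := hx
    refine ⟨blockPt_mem_gammaEx (by omega) (by omega), ?_, ?_⟩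
    · linarith [(blockPt_mem_Icc (hk.trans hNp')).1]
    · have hk' : (k : ℝ) ≤ N := by exact_mod_cast hk.le
      linarith [blockPt_le_of_two_mul_le (ℓ := ℓ) (k := k) (T := T) (by linarith)]
  calc N = ((Finset.range N).image (blockPt ℓ)).card := by
        rw [Finset.card_image_of_injective _ (blockPt_strictMono ℓ).injective, Finset.card_range]
    _ ≤ impCnt gammaEx _ _ := isImpulseSeq_gammaEx.card_le_impCnt hsub

/-- Example 1: `gammaEx` is an impulse-time sequence whose upper asymptotic impulse
frequency from time `0` is at most `3/2`, yet in every window of any fixed length `T > 0`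
the number of impulses is unbounded over the window position; consequently
`gammaEx ∉ Sup(ρ)` for every `ρ > 0`. -/
theorem gammaEx_limsup_le_but_not_sup :
    IsImpulseSeq gammaEx ∧
    Filter.limsup (fun t : ℝ => (impCnt gammaEx 0 t : ℝ≥0∞) / ENNReal.ofReal t)
        Filter.atTop ≤ (3 / 2 : ℝ≥0∞) ∧
    (∀ T : ℝ, 0 < T → ∀ N : ℕ, ∃ s : ℝ, 0 ≤ s ∧ N ≤ impCnt gammaEx s (s + T)) ∧
    (∀ ρ : ℝ, 0 < ρ → ¬ MemSup ρ gammaEx) := by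
  have hwindow : ∀ T : ℝ, 0 < T → ∀ N : ℕ, ∃ s : ℝ, 0 ≤ s ∧ N ≤ impCnt gammaEx s (s + T) :=
    fun _ => exists_le_impCnt_gammaEx
  refine ⟨isImpulseSeq_gammaEx, ?_, hwindow, fun ρ _ => not_memSup_of_forall_le_impCnt hwindow ρ⟩
  have hlimsup := limsup_natCast_div_ofReal_le (f := impCnt gammaEx 0) (c := 3 / 2) (d := 3 / 2)
    ((eventually_ge_atTop 0).mono fun _ ht => by simpa using impCnt_gammaEx_zero_le ht)
  simpa using hlimsup
end
end

section
/- Let φ be of class P and let p : ℝ≥0 → ℝ≥0 be locally integrable, and suppose there exists θ > 0 such that N := inf_{t≥0} ∫_t^{t+θ} p(s) ds > 0. Then for every t0 ≥ 0 and w0 ≥ 0 there exists a unique forward-in-time solution w : [t0,∞) → ℝ≥0 of the scalar ODE ẇ = −p(t)φ(w) with w(t0) = w0; i.e., there exists a nonnegative locally absolutely continuous function w on [t0,∞) with w(t0) = w0 satisfying w'(t) = −p(t)φ(w(t)) for almost all t ≥ t0, and any two such functions coincide on [t0,∞). -/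
/-!
Separation of variables. The autonomous problem `v' = -φ(v)`, `v(0) = w0` is solved by the
generalized inverse `v` of the descent time `G(r) = ∫_r^{w0} 1/φ`, which stays at `0` once it
gets there. With `P(t) = ∫_{t0}^t p`, the function `v ∘ P` solves the equation: the change of
variables `u = P(s)` holds for the merely absolutely continuous `P` by the fundamental theorem of
calculus for absolutely continuous functions. Conversely, a solution `w` is nonincreasing, and as
long as `w > 0` the substitution `u = w0 - w(s)` gives `G(w(t)) = P(t)`, i.e. `w = v ∘ P`; by
continuity this persists up to the first zero of `w`, after which both functions vanish.
-/

open Set Filter MeasureTheory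

noncomputable section

/-- A function of class `P`: continuous on `[0,∞)`, zero at zero, and positive on `(0,∞)`. -/
def ClassP (α : ℝ → ℝ) : Prop :=
  ContinuousOn α (Set.Ici 0) ∧ α 0 = 0 ∧ ∀ s : ℝ, 0 < s → 0 < α s

/-- `p : [0,∞) → [0,∞)` is nonnegative and locally (Lebesgue) integrable. -/
def LocIntNN (p : ℝ → ℝ) : Prop :=
  (∀ s : ℝ, 0 ≤ p s) ∧
    ∀ a b : ℝ, 0 ≤ a → a ≤ b → IntervalIntegrable p MeasureTheory.volume a b

/-- `N = inf_{t ≥ 0} ∫_t^{t+θ} p(s) ds`. -/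
def Nval (p : ℝ → ℝ) (θ : ℝ) : ℝ :=
  sInf {y : ℝ | ∃ t : ℝ, 0 ≤ t ∧ y = ∫ s in t..(t + θ), p s}

/-- `w : [t0,∞) → [0,∞)` is a (forward-in-time, globally defined) solution of the scalar
ODE `ẇ = −p(t)·φ(w)` with `w(t0) = w0`: it is nonnegative and locally absolutely
continuous with `w'(t) = −p(t)φ(w(t))` for a.e. `t ≥ t0`, encoded by the equivalent
integral equation `w(t) = w0 − ∫_{t0}^t p(s)φ(w(s)) ds`. -/
def IsODESol (p φ : ℝ → ℝ) (t0 w0 : ℝ) (w : ℝ → ℝ) : Prop :=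
  w t0 = w0 ∧ (∀ t : ℝ, t0 ≤ t → 0 ≤ w t) ∧
    ∀ t : ℝ, t0 ≤ t →
      IntervalIntegrable (fun s => p s * φ (w s)) MeasureTheory.volume t0 t ∧
      w t = w0 - ∫ s in t0..t, p s * φ (w s)

open Topology

theorem LipschitzOnWith.comp_absolutelyContinuousOnInterval {X Y : Type*} [PseudoMetricSpace X]
    [PseudoMetricSpace Y] {f : ℝ → X} {g : X → Y} {K : NNReal} {s : Set X} {a b : ℝ}
    (hg : LipschitzOnWith K g s) (hf : AbsolutelyContinuousOnInterval f a b)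
    (hfs : MapsTo f (uIcc a b) s) : AbsolutelyContinuousOnInterval (g ∘ f) a b := by
  refine squeeze_zero' (Eventually.of_forall fun _ => Finset.sum_nonneg fun _ _ => dist_nonneg)
    ?_ (by simpa using Tendsto.const_mul (K : ℝ) hf)
  filter_upwards [mem_inf_of_right (mem_principal_self _)] with E hE
  rw [Finset.mul_sum]
  exact Finset.sum_le_sum fun i hi =>
    hg.dist_le_mul _ (hfs (hE.1 i hi).1) _ (hfs (hE.1 i hi).2)

theorem integral_mul_comp_primitive {q g : ℝ → ℝ} {a b : ℝ} (hab : a ≤ b)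
    (hq : IntervalIntegrable q volume a b) (hq0 : ∀ s ∈ Icc a b, 0 ≤ q s)
    (hg : ContinuousOn g (Icc 0 (∫ x in a..b, q x))) :
    ∫ s in a..b, q s * g (∫ x in a..s, q x) = ∫ u in 0..(∫ x in a..b, q x), g u := by
  set Q : ℝ → ℝ := fun s => ∫ x in a..s, q x
  have hQ_maps : MapsTo Q (uIcc a b) (Icc 0 (Q b)) := by
    intro s hs
    rw [uIcc_of_le hab] at hs
    exact ⟨intervalIntegral.integral_nonneg hs.1 fun x hx => hq0 x ⟨hx.1, hx.2.trans hs.2⟩,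
      intervalIntegral.integral_mono_interval le_rfl hs.1 hs.2 ((ae_restrict_iff'
        measurableSet_Ioc).mpr (ae_of_all _ fun x hx => hq0 x ⟨hx.1.le, hx.2⟩)) hq⟩
  have hQb : 0 ≤ Q b := (hQ_maps right_mem_uIcc).1
  -- `g'` extends `g` continuously to `ℝ`, so that its primitive `H` is `C¹`, hence Lipschitz
  set g' := IccExtend hQb ((Icc 0 (Q b)).domRestrict g)
  have hg'_cont : Continuous g' := continuous_IccExtend_iff.mpr hg.domRestrict
  have hg'_eq : EqOn g' g (Icc 0 (Q b)) := fun y hy => IccExtend_of_mem _ _ hy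
  set H : ℝ → ℝ := fun y => ∫ u in 0..y, g' u
  have hH : ∀ y, HasDerivAt H (g' y) y := fun y =>
    (hg'_cont.integral_hasStrictDerivAt 0 y).hasDerivAt
  have hH_C1 : ContDiff ℝ 1 H := contDiff_one_iff_deriv.mpr
    ⟨fun y => (hH y).differentiableAt,
      by rwa [show deriv H = g' from funext fun y => (hH y).deriv]⟩
  obtain ⟨K, hK⟩ := hH_C1.contDiffOn.exists_lipschitzOnWith one_ne_zero (convex_Icc 0 (Q b))
    isCompact_Icc
  have hHQ := hK.comp_absolutelyContinuousOnInterval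
    (hq.absolutelyContinuousOnInterval_intervalIntegral left_mem_uIcc) hQ_maps
  calc ∫ s in a..b, q s * g (Q s) = ∫ s in a..b, deriv (H ∘ Q) s := by
        refine intervalIntegral.integral_congr_ae ?_
        filter_upwards [hq.ae_hasDerivAt_integral] with s hs hsab
        have hsab' := uIoc_subset_uIcc hsab
        rw [((hH (Q s)).comp s (hs hsab' a left_mem_uIcc)).deriv, hg'_eq (hQ_maps hsab'),
          mul_comm]
    _ = H (Q b) := by
        rw [hHQ.integral_deriv_eq_sub]
        simp [Q, H]
    _ = ∫ u in 0..(Q b), g u :=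
        intervalIntegral.integral_congr (hg'_eq.mono (uIcc_of_le hQb).subset)

theorem eq_of_forall_pos_imp_eq {f g : ℝ → ℝ} {a b : ℝ} (hab : a ≤ b)
    (hf : ContinuousOn f (Icc a b)) (hf0 : ∀ s ∈ Icc a b, 0 ≤ f s) (hfa : 0 < f a)
    (hg : AntitoneOn g (Icc a b)) (hgb : 0 ≤ g b)
    (hfg : ∀ s ∈ Icc a b, 0 < f s → f s = g s) : f b = g b := by
  have hb : b ∈ Icc a b := right_mem_Icc.2 hab
  rcases (hf0 b hb).lt_or_eq with hfb | hfb
  · exact hfg b hb hfb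
  -- `c` is the first zero of `f`; before it `f = g`, so `g c ≤ f c = 0` by continuity of `f`
  set Z := Icc a b ∩ f ⁻¹' {0}
  have hZ_bdd : BddBelow Z := ⟨a, fun s hs => hs.1.1⟩
  have hc : sInf Z ∈ Z :=
    (hf.preimage_isClosed_of_isClosed isClosed_Icc isClosed_singleton).csInf_mem
      ⟨b, hb, hfb.symm⟩ hZ_bdd
  set c := sInf Z
  have hfc : f c = 0 := hc.2
  have hac : a < c := hc.1.1.lt_of_ne fun h => hfa.ne' (h ▸ hfc)
  have hcb : Icc a c ⊆ Icc a b := Icc_subset_Icc_right hc.1.2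
  have hfg_before : ∀ s ∈ Ico a c, g c ≤ f s := fun s hs => by
    have hs' : s ∈ Icc a b := hcb (Ico_subset_Icc_self hs)
    have hfs : 0 < f s :=
      (hf0 s hs').lt_of_ne' fun h => hs.2.not_ge (csInf_le hZ_bdd ⟨hs', h⟩)
    exact (hg hs' hc.1 hs.2.le).trans_eq (hfg s hs' hfs).symm
  have hc_closure : c ∈ closure (Ico a c) := by
    rw [closure_Ico hac.ne]
    exact right_mem_Icc.2 hac.le
  have hgc : g c ≤ f c := ContinuousWithinAt.closure_le (f := fun _ => g c) hc_closure
    continuousWithinAt_const ((hf c hc.1).mono (Ico_subset_Icc_self.trans hcb)) hfg_before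
  rw [← hfb]
  exact le_antisymm hgb ((hg hc.1 hb hc.1.2).trans (hgc.trans_eq hfc))

section Descent

variable {φ : ℝ → ℝ} {w0 : ℝ}

theorem ClassP.nonneg (hφ : ClassP φ) {r : ℝ} (hr : 0 ≤ r) : 0 ≤ φ r :=
  hr.eq_or_lt.elim (fun h => h ▸ hφ.2.1.ge) fun h => (hφ.2.2 r h).le

theorem ClassP.continuousOn_inv (hφ : ClassP φ) : ContinuousOn (fun u => (φ u)⁻¹) (Ioi 0) :=
  (hφ.1.mono Ioi_subset_Ici_self).inv₀ fun u hu => (hφ.2.2 u hu).ne'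

theorem ClassP.intervalIntegrable_inv (hφ : ClassP φ) {a b : ℝ} (ha : 0 < a) (hb : 0 < b) :
    IntervalIntegrable (fun u => (φ u)⁻¹) volume a b :=
  (hφ.continuousOn_inv.mono fun _ hu => (lt_min ha hb).trans_le hu.1).intervalIntegrable

/-- The time `ẏ = -φ(y)` needs to descend from `w0` to `r`. -/
def descentTime (φ : ℝ → ℝ) (w0 r : ℝ) : ℝ := ∫ u in r..w0, (φ u)⁻¹

/-- The solution of `ẏ = -φ(y)`, `y(0) = w0`, as the generalized inverse of `descentTime`: it
vanishes from the (possibly infinite) time `∫₀^w0 1/φ` on. -/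
def descent (φ : ℝ → ℝ) (w0 x : ℝ) : ℝ :=
  sInf {r | r ∈ Ioc 0 w0 ∧ descentTime φ w0 r ≤ x}

theorem descentTime_self : descentTime φ w0 w0 = 0 := intervalIntegral.integral_same

theorem hasDerivAt_descentTime (hφ : ClassP φ) (hw0 : 0 < w0) {r : ℝ} (hr : 0 < r) :
    HasDerivAt (descentTime φ w0) (-(φ r)⁻¹) r :=
  intervalIntegral.integral_hasDerivAt_left (hφ.intervalIntegrable_inv hr hw0)
    (hφ.continuousOn_inv.stronglyMeasurableAtFilter isOpen_Ioi r hr)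
    (hφ.continuousOn_inv.continuousAt (Ioi_mem_nhds hr))

theorem descentTime_strictAntiOn (hφ : ClassP φ) (hw0 : 0 < w0) :
    StrictAntiOn (descentTime φ w0) (Ioi 0) := by
  intro a ha b hb hab
  have hsplit := intervalIntegral.integral_add_adjacent_intervals
    (hφ.intervalIntegrable_inv ha hb) (hφ.intervalIntegrable_inv hb hw0)
  have hpos := intervalIntegral.intervalIntegral_pos_of_pos_on (hφ.intervalIntegrable_inv ha hb)
    (fun u hu => inv_pos.2 (hφ.2.2 u (ha.trans hu.1))) hab
  simp only [descentTime] at hsplit ⊢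
  linarith

theorem descentTime_nonneg (hφ : ClassP φ) {r : ℝ} (hr : r ∈ Ioc 0 w0) :
    0 ≤ descentTime φ w0 r :=
  descentTime_self.symm.trans_le <|
    (descentTime_strictAntiOn hφ (hr.1.trans_le hr.2)).antitoneOn hr.1 (hr.1.trans_le hr.2) hr.2

theorem descent_nonneg (x : ℝ) : 0 ≤ descent φ w0 x := Real.sInf_nonneg fun _ hr => hr.1.1.le

theorem descent_le_of_descentTime_le {r x : ℝ} (hr : r ∈ Ioc 0 w0)
    (h : descentTime φ w0 r ≤ x) : descent φ w0 x ≤ r :=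
  csInf_le ⟨0, fun _ hs => hs.1.1.le⟩ ⟨hr, h⟩

theorem le_descent (hw0 : 0 < w0) {r x : ℝ} (hx : 0 ≤ x)
    (h : ∀ s ∈ Ioc 0 w0, descentTime φ w0 s ≤ x → r ≤ s) : r ≤ descent φ w0 x :=
  le_csInf ⟨w0, ⟨hw0, le_rfl⟩, descentTime_self.trans_le hx⟩ fun _ hs => h _ hs.1 hs.2

theorem descent_le (hw0 : 0 < w0) {x : ℝ} (hx : 0 ≤ x) : descent φ w0 x ≤ w0 :=
  descent_le_of_descentTime_le ⟨hw0, le_rfl⟩ (descentTime_self.trans_le hx)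

theorem descent_antitoneOn (hw0 : 0 < w0) : AntitoneOn (descent φ w0) (Ici 0) :=
  fun _ hx _ _ hxy =>
    le_descent hw0 hx fun _ hs h => descent_le_of_descentTime_le hs (h.trans hxy)

theorem descent_descentTime (hφ : ClassP φ) (hw0 : 0 < w0) {r : ℝ} (hr : r ∈ Ioc 0 w0) :
    descent φ w0 (descentTime φ w0 r) = r :=
  (descent_le_of_descentTime_le hr le_rfl).antisymm <|
    le_descent hw0 (descentTime_nonneg hφ hr) fun _ hs h =>
      not_lt.1 fun hsr => (descentTime_strictAntiOn hφ hw0 hs.1 hr.1 hsr).not_ge h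

theorem descent_zero (hφ : ClassP φ) (hw0 : 0 < w0) : descent φ w0 0 = w0 := by
  simpa [descentTime_self] using descent_descentTime hφ hw0 ⟨hw0, le_rfl⟩

theorem descent_le_iff (hφ : ClassP φ) (hw0 : 0 < w0) {r x : ℝ} (hr : r ∈ Ioc 0 w0)
    (hx : 0 ≤ x) : descent φ w0 x ≤ r ↔ descentTime φ w0 r ≤ x := by
  refine ⟨fun h => ?_, descent_le_of_descentTime_le hr⟩
  by_contra! hlt
  -- `descentTime` stays above `x` on some `[r, r')`, which pushes `descent φ w0 x` up to `r'`
  obtain ⟨r', hrr', hr'⟩ := exists_Ico_subset_of_mem_nhds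
    ((hasDerivAt_descentTime hφ hw0 hr.1).continuousAt.eventually (lt_mem_nhds hlt))
    ⟨r + 1, lt_add_one r⟩
  have : r' ≤ descent φ w0 x := le_descent hw0 hx fun s hs hsx => by
    by_contra! hsr'
    rcases lt_or_ge s r with hsr | hrs
    · exact (hlt.trans (descentTime_strictAntiOn hφ hw0 hs.1 hr.1 hsr)).not_ge hsx
    · exact (hr' ⟨hrs, hsr'⟩ : x < descentTime φ w0 s).not_ge hsx
  linarith

theorem descentTime_descent (hφ : ClassP φ) (hw0 : 0 < w0) {x : ℝ} (hx : 0 ≤ x)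
    (hpos : 0 < descent φ w0 x) : descentTime φ w0 (descent φ w0 x) = x := by
  have hmem : descent φ w0 x ∈ Ioc 0 w0 := ⟨hpos, descent_le hw0 hx⟩
  refine ((descent_le_iff hφ hw0 hmem hx).mp le_rfl).antisymm ?_
  by_contra! hlt
  obtain ⟨l, hl, hlv⟩ := exists_Ioc_subset_of_mem_nhds
    ((hasDerivAt_descentTime hφ hw0 hpos).continuousAt.eventually (gt_mem_nhds hlt))
    ⟨0, hpos⟩
  obtain ⟨r, hr, hrv⟩ := exists_between (max_lt hl hpos)
  have hr_mem : r ∈ Ioc 0 w0 := ⟨(le_max_right _ _).trans_lt hr, hrv.le.trans hmem.2⟩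
  exact hrv.not_ge
    (descent_le_of_descentTime_le hr_mem (hlv ⟨(le_max_left _ _).trans_lt hr, hrv.le⟩).le)

theorem continuousOn_descent (hφ : ClassP φ) (hw0 : 0 < w0) :
    ContinuousOn (descent φ w0) (Ici 0) := by
  intro x hx
  refine tendsto_order.2 ⟨fun a hav => ?_, fun b hvb => ?_⟩
  · rcases lt_or_ge a 0 with ha | ha
    · exact Eventually.of_forall fun y => ha.trans_le (descent_nonneg y)
    obtain ⟨r, har, hrv⟩ := exists_between hav
    have hr : r ∈ Ioc 0 w0 := ⟨ha.trans_lt har, hrv.le.trans (descent_le hw0 hx)⟩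
    have hxr : x < descentTime φ w0 r := lt_of_not_ge fun h =>
      hrv.not_ge (descent_le_of_descentTime_le hr h)
    filter_upwards [self_mem_nhdsWithin, nhdsWithin_le_nhds (gt_mem_nhds hxr)] with y hy hyr
    exact har.trans (lt_of_not_ge fun h => hyr.not_ge ((descent_le_iff hφ hw0 hr hy).mp h))
  · rcases lt_or_ge w0 b with hb | hb
    · filter_upwards [self_mem_nhdsWithin] with y hy
      exact (descent_le hw0 hy).trans_lt hb
    obtain ⟨c, hvc, hcb⟩ := exists_between hvb
    obtain ⟨r, hcr, hrb⟩ := exists_between hcb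
    have hc_pos : 0 < c := (descent_nonneg x).trans_lt hvc
    have hrx : descentTime φ w0 r < x :=
      (descentTime_strictAntiOn hφ hw0 hc_pos (hc_pos.trans hcr) hcr).trans_le
        ((descent_le_iff hφ hw0 ⟨hc_pos, (hcr.trans hrb).le.trans hb⟩ hx).mp hvc.le)
    filter_upwards [nhdsWithin_le_nhds (lt_mem_nhds hrx)] with y hy
    exact (descent_le_of_descentTime_le ⟨hc_pos.trans hcr, hrb.le.trans hb⟩ hy.le).trans_lt hrb

theorem hasDerivAt_descent (hφ : ClassP φ) (hw0 : 0 < w0) {x : ℝ} (hx : 0 < x)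
    (hpos : 0 < descent φ w0 x) : HasDerivAt (descent φ w0) (-φ (descent φ w0 x)) x := by
  have hcont : ContinuousAt (descent φ w0) x :=
    (continuousOn_descent hφ hw0).continuousAt (Ici_mem_nhds hx)
  have hinv : ∀ᶠ y in 𝓝 x, descentTime φ w0 (descent φ w0 y) = y := by
    filter_upwards [hcont.eventually (lt_mem_nhds hpos), lt_mem_nhds hx] with y hvy hy
    exact descentTime_descent hφ hw0 hy.le hvy
  simpa using (hasDerivAt_descentTime hφ hw0 hpos).of_local_left_inverse hcont
    (neg_ne_zero.2 (inv_ne_zero (hφ.2.2 _ hpos).ne')) hinv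

theorem integral_comp_descent (hφ : ClassP φ) (hw0 : 0 < w0) {x : ℝ} (hx : 0 ≤ x) :
    ∫ u in 0..x, φ (descent φ w0 u) = w0 - descent φ w0 x := by
  have hcont : ContinuousOn (descent φ w0) (uIcc 0 x) :=
    (continuousOn_descent hφ hw0).mono (by rw [uIcc_of_le hx]; exact Icc_subset_Ici_self)
  have hderiv : ∀ u ∈ Ioo (min 0 x) (max 0 x),
      HasDerivWithinAt (descent φ w0) (-φ (descent φ w0 u)) (Ioi u) u := by
    rw [min_eq_left hx, max_eq_right hx]
    intro u hu
    rcases (descent_nonneg u).eq_or_lt with h0 | hpos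
    · have hzero : ∀ y ∈ Ioi u, descent φ w0 y = 0 := fun y hy =>
        ((descent_antitoneOn hw0 hu.1.le (hu.1.trans hy).le hy.le).trans h0.ge).antisymm
          (descent_nonneg y)
      rw [← h0, hφ.2.1, neg_zero]
      exact (hasDerivWithinAt_const u (Ioi u) 0).congr hzero h0.symm
    · exact (hasDerivAt_descent hφ hw0 hu.1 hpos).hasDerivWithinAt
  have hFTC := intervalIntegral.integral_eq_sub_of_hasDeriv_right hcont hderiv
    ((hφ.1.comp hcont fun u _ => descent_nonneg u).neg.intervalIntegrable)
  rw [intervalIntegral.integral_neg, descent_zero hφ hw0] at hFTC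
  linarith

end Descent

section Solutions

variable {p φ : ℝ → ℝ} {t0 w0 : ℝ}

theorem LocIntNN.monotoneOn_integral (hp : LocIntNN p) (ht0 : 0 ≤ t0) :
    MonotoneOn (fun t => ∫ s in t0..t, p s) (Ici t0) := fun _ ha b hb hab =>
  intervalIntegral.integral_mono_interval le_rfl ha hab (Eventually.of_forall fun s => hp.1 s)
    (hp.2 t0 b ht0 hb)

theorem isODESol_descent_comp (hφ : ClassP φ) (hp : LocIntNN p) (ht0 : 0 ≤ t0) (hw0 : 0 < w0) :
    IsODESol p φ t0 w0 fun t => descent φ w0 (∫ s in t0..t, p s) := by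
  refine ⟨by simp [descent_zero hφ hw0], fun _ _ => descent_nonneg _, fun t ht => ?_⟩
  have hpi := hp.2 t0 t ht0 ht
  have hP_nonneg : ∀ s ∈ uIcc t0 t, 0 ≤ ∫ x in t0..s, p x := fun s hs =>
    intervalIntegral.integral_nonneg (uIcc_of_le ht ▸ hs).1 fun x _ => hp.1 x
  have hφv : ContinuousOn (fun u => φ (descent φ w0 u)) (Ici 0) :=
    hφ.1.comp (continuousOn_descent hφ hw0) fun u _ => descent_nonneg u
  refine ⟨hpi.mul_continuousOn (hφv.comp (intervalIntegral.continuousOn_primitive_interval' hpi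
    left_mem_uIcc) hP_nonneg), ?_⟩
  rw [integral_mul_comp_primitive ht hpi (fun s _ => hp.1 s) (hφv.mono fun u hu => hu.1),
    integral_comp_descent hφ hw0 (hP_nonneg t right_mem_uIcc)]
  ring

theorem isODESol_zero (hφ0 : φ 0 = 0) : IsODESol p φ t0 0 0 :=
  ⟨rfl, fun _ _ => le_rfl, fun _ _ => by simp [hφ0]⟩

namespace IsODESol

variable {w : ℝ → ℝ}

theorem antitoneOn (hw : IsODESol p φ t0 w0 w) (hφ : ClassP φ) (hp0 : ∀ s, 0 ≤ p s) :
    AntitoneOn w (Ici t0) := by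
  intro a ha b hb hab
  obtain ⟨hia, hwa⟩ := hw.2.2 a ha
  obtain ⟨hib, hwb⟩ := hw.2.2 b hb
  have hsplit := intervalIntegral.integral_add_adjacent_intervals hia (hia.symm.trans hib)
  have hnonneg : 0 ≤ ∫ s in a..b, p s * φ (w s) := intervalIntegral.integral_nonneg hab
    fun s hs => mul_nonneg (hp0 s) (hφ.nonneg (hw.2.1 s (ha.trans hs.1)))
  linarith

theorem continuousOn (hw : IsODESol p φ t0 w0 w) {t : ℝ} (ht : t0 ≤ t) :
    ContinuousOn w (Icc t0 t) := by
  rw [← uIcc_of_le ht]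
  exact (continuousOn_const.sub (intervalIntegral.continuousOn_primitive_interval'
    (hw.2.2 t ht).1 left_mem_uIcc)).congr fun s hs => (hw.2.2 s (uIcc_of_le ht ▸ hs).1).2

theorem eq_zero (hw : IsODESol p φ t0 0 w) (hφ : ClassP φ) (hp0 : ∀ s, 0 ≤ p s) {t : ℝ}
    (ht : t0 ≤ t) : w t = 0 :=
  ((hw.antitoneOn hφ hp0 self_mem_Ici ht ht).trans_eq hw.1).antisymm (hw.2.1 t ht)

theorem descentTime_eq (hw : IsODESol p φ t0 w0 w) (hφ : ClassP φ) (hp0 : ∀ s, 0 ≤ p s)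
    {τ : ℝ} (hτ : t0 ≤ τ) (hpos : 0 < w τ) :
    descentTime φ w0 (w τ) = ∫ s in t0..τ, p s := by
  set q := fun s => p s * φ (w s)
  have hQ : ∀ s ∈ Icc t0 τ, ∫ x in t0..s, q x = w0 - w s := fun s hs => by
    linarith [(hw.2.2 s hs.1).2]
  have hw_ge : ∀ s ∈ Icc t0 τ, w τ ≤ w s := fun s hs => hw.antitoneOn hφ hp0 hs.1 hτ hs.2
  have hg : ContinuousOn (fun x => (φ (w0 - x))⁻¹) (Icc 0 (∫ x in t0..τ, q x)) := by
    rw [hQ τ (right_mem_Icc.2 hτ)]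
    have hpos' : ∀ x ∈ Icc 0 (w0 - w τ), 0 < w0 - x := fun x hx => by linarith [hx.2]
    exact (hφ.1.comp (continuousOn_const.sub continuousOn_id) fun x hx => (hpos' x hx).le).inv₀
      fun x hx => (hφ.2.2 _ (hpos' x hx)).ne'
  -- substitute `u = w0 - w s`, so that `du = p s * φ (w s) ds`
  calc descentTime φ w0 (w τ) = ∫ x in 0..(w0 - w τ), (φ (w0 - x))⁻¹ := by
        rw [intervalIntegral.integral_comp_sub_left (fun u => (φ u)⁻¹)]
        simp [descentTime]
    _ = ∫ s in t0..τ, q s * (φ (w0 - ∫ x in t0..s, q x))⁻¹ := by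
        rw [← hQ τ (right_mem_Icc.2 hτ)]
        exact (integral_mul_comp_primitive hτ (hw.2.2 τ hτ).1
          (fun s hs => mul_nonneg (hp0 s) (hφ.nonneg (hw.2.1 s hs.1))) hg).symm
    _ = ∫ s in t0..τ, p s := by
        refine intervalIntegral.integral_congr fun s hs => ?_
        rw [uIcc_of_le hτ] at hs
        have hφs : φ (w s) ≠ 0 := (hφ.2.2 _ (hpos.trans_le (hw_ge s hs))).ne'
        simp only [q, hQ s hs, sub_sub_cancel, mul_assoc, mul_inv_cancel₀ hφs, mul_one]

theorem eq_descent_comp (hw : IsODESol p φ t0 w0 w) (hφ : ClassP φ) (hp : LocIntNN p)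
    (ht0 : 0 ≤ t0) (hw0 : 0 < w0) {t : ℝ} (ht : t0 ≤ t) :
    w t = descent φ w0 (∫ s in t0..t, p s) := by
  have hP := hp.monotoneOn_integral ht0
  have hP_nonneg : ∀ s, t0 ≤ s → 0 ≤ ∫ x in t0..s, p x := fun s hs =>
    intervalIntegral.integral_nonneg hs fun x _ => hp.1 x
  refine eq_of_forall_pos_imp_eq (g := fun s => descent φ w0 (∫ x in t0..s, p x)) ht
    (hw.continuousOn ht) (fun s hs => hw.2.1 s hs.1) (hw.1 ▸ hw0) ?_ (descent_nonneg _)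
    fun s hs hpos => ?_
  · exact fun a ha b hb hab => descent_antitoneOn hw0 (hP_nonneg a ha.1) (hP_nonneg b hb.1)
      (hP ha.1 hb.1 hab)
  · have hle : w s ≤ w0 := (hw.antitoneOn hφ hp.1 self_mem_Ici hs.1 hs.1).trans_eq hw.1
    rw [← hw.descentTime_eq hφ hp.1 hs.1 hpos, descent_descentTime hφ hw0 ⟨hpos, hle⟩]

end IsODESol

end Solutions

theorem ode_exists_unique_general (φ p : ℝ → ℝ) (hφ : ClassP φ) (hp : LocIntNN p) :
    ∀ t0 : ℝ, 0 ≤ t0 → ∀ w0 : ℝ, 0 ≤ w0 →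
      (∃ w : ℝ → ℝ, IsODESol p φ t0 w0 w) ∧
      (∀ w1 w2 : ℝ → ℝ, IsODESol p φ t0 w0 w1 → IsODESol p φ t0 w0 w2 →
        ∀ t : ℝ, t0 ≤ t → w1 t = w2 t) := by
  intro t0 ht0 w0 hw0
  suffices ∃ w, IsODESol p φ t0 w0 w ∧
      ∀ w', IsODESol p φ t0 w0 w' → ∀ t, t0 ≤ t → w' t = w t by
    obtain ⟨w, hw, huniq⟩ := this
    exact ⟨⟨w, hw⟩, fun w1 w2 h1 h2 t ht =>
      (huniq w1 h1 t ht).trans (huniq w2 h2 t ht).symm⟩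
  rcases hw0.eq_or_lt with rfl | hw0
  · exact ⟨0, isODESol_zero hφ.2.1, fun w' hw' t ht => hw'.eq_zero hφ hp.1 ht⟩
  · exact ⟨_, isODESol_descent_comp hφ hp ht0 hw0,
      fun w' hw' t ht => hw'.eq_descent_comp hφ hp ht0 hw0 ht⟩

/-- Lemma 3 a): if `φ` is of class `P`, `p` is nonnegative and locally integrable, and
`N = inf_{t≥0} ∫_t^{t+θ} p > 0` for some `θ > 0`, then for every `t0 ≥ 0` and `w0 ≥ 0`
there exists a unique forward-in-time solution `w : [t0,∞) → [0,∞)` of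
`ẇ = −p(t)φ(w)`, `w(t0) = w0`. -/
theorem ode_exists_unique (φ p : ℝ → ℝ) (hφ : ClassP φ) (hp : LocIntNN p)
    (θ : ℝ) (hθ : 0 < θ) (hN : 0 < Nval p θ) :
    ∀ t0 : ℝ, 0 ≤ t0 → ∀ w0 : ℝ, 0 ≤ w0 →
      (∃ w : ℝ → ℝ, IsODESol p φ t0 w0 w) ∧
      (∀ w1 w2 : ℝ → ℝ, IsODESol p φ t0 w0 w1 → IsODESol p φ t0 w0 w2 →
        ∀ t : ℝ, t0 ≤ t → w1 t = w2 t) :=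
  ode_exists_unique_general φ p hφ hp
end
end

section
/- Let φ, ψ be of class P, let p : ℝ≥0 → ℝ≥0 be locally integrable, and let S ⊂ Γ be uniformly incrementally bounded (UIB). Then the comparison system is strongly GUAS uniformly over S if and only if it is weakly GUAS uniformly over S. -/
/-!
Strong GUAS implies weak GUAS because a `KL` bound decreases in time. Conversely, UIB bounds
the number `n` of impulses in `(t₀, t]` by `φ₀ (t - t₀)`, so `t - t₀ + n ≤ g (t - t₀)` for the
strictly increasing gauge `g u = u + max (φ₀ u) 0`. The weak bound `β z₀ (t - t₀)` is therefore
at most `β z₀ (g⁻¹ (t - t₀ + n))`, with `g⁻¹` a continuous, nondecreasing, unbounded generalized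
inverse; adding `z₀ e^{-s}` makes the reparametrized bound strictly decreasing, hence of class `KL`.
-/

open Set Filter MeasureTheory

noncomputable section

/-- A function of class `KL`: continuous on `[0,∞)×[0,∞)`, nonnegative there, for each fixed
`t ≥ 0` strictly increasing in the first argument with value `0` at `0`, for each fixed
`r ≥ 0` strictly decreasing in the second argument whenever positive, and tending to `0` as
the second argument tends to `∞`. -/
def ClassKL (β : ℝ → ℝ → ℝ) : Prop :=
  ContinuousOn (fun q : ℝ × ℝ => β q.1 q.2) (Set.Ici 0 ×ˢ Set.Ici 0) ∧
  (∀ r t : ℝ, 0 ≤ r → 0 ≤ t → 0 ≤ β r t) ∧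
  (∀ t : ℝ, 0 ≤ t → StrictMonoOn (fun r => β r t) (Set.Ici 0) ∧ β 0 t = 0) ∧
  (∀ r : ℝ, 0 ≤ r → ∀ t1 t2 : ℝ, 0 ≤ t1 → t1 < t2 → 0 < β r t1 → β r t2 < β r t1) ∧
  (∀ r : ℝ, 0 ≤ r → Filter.Tendsto (fun t => β r t) Filter.atTop (nhds 0))

/-- `z : [t0, T) → [0,∞)` is a solution of the comparison system
`ż(t) ∈ (−∞, −p(t)φ(z(t))]` for `t ∉ γ`, `z(t) ∈ [0, ψ(z(t⁻))]` for `t ∈ γ`,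
with `z(t0) = z0` (the right endpoint `T` is an extended real, `T = ⊤` meaning a
solution defined on all of `[t0,∞)`).  Between impulse times `z` is continuous, and its
local absolute continuity together with `z' ≤ −p·φ∘z` a.e. is encoded by the integral
inequality `z(b) − z(a) ≤ −∫_a^b p(s)φ(z(s)) ds` on impulse-free subintervals;
at each impulse time in `(t0, T)` the left limit exists and the jump condition holds. -/
structure IsCompSol (p φ ψ : ℝ → ℝ) (γ : Set ℝ) (t0 : ℝ) (T : EReal) (z0 : ℝ)
    (z : ℝ → ℝ) : Prop where
  dom : (t0 : EReal) < T
  init : z t0 = z0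
  nonneg : ∀ t : ℝ, t0 ≤ t → (t : EReal) < T → 0 ≤ z t
  flow_cont : ∀ a b : ℝ, t0 ≤ a → a ≤ b → (b : EReal) < T → γ ∩ Set.Ioc a b = ∅ →
    ContinuousOn z (Set.Icc a b)
  flow_int : ∀ a b : ℝ, t0 ≤ a → a ≤ b → (b : EReal) < T → γ ∩ Set.Ioc a b = ∅ →
    IntervalIntegrable (fun s => p s * φ (z s)) MeasureTheory.volume a b ∧
      z b - z a ≤ - ∫ s in a..b, p s * φ (z s)
  jump : ∀ τ ∈ γ, t0 < τ → (τ : EReal) < T →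
    ∃ L : ℝ, Filter.Tendsto z (nhdsWithin τ (Set.Iio τ)) (nhds L) ∧ z τ ≤ ψ L

/-- The comparison system is weakly GUAS uniformly over the family `S` of impulse-time
sequences. -/
def WeakGUAS (p φ ψ : ℝ → ℝ) (S : Set (Set ℝ)) : Prop :=
  ∃ β : ℝ → ℝ → ℝ, ClassKL β ∧
    ∀ γ ∈ S, ∀ t0 : ℝ, 0 ≤ t0 → ∀ z0 : ℝ, 0 ≤ z0 → ∀ (T : EReal) (z : ℝ → ℝ),
      IsCompSol p φ ψ γ t0 T z0 z →
        ∀ t : ℝ, t0 ≤ t → (t : EReal) < T → z t ≤ β z0 (t - t0)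

/-- The comparison system is strongly GUAS uniformly over the family `S` of impulse-time
sequences (the decay also counts the number of impulses). -/
def StrongGUAS (p φ ψ : ℝ → ℝ) (S : Set (Set ℝ)) : Prop :=
  ∃ β : ℝ → ℝ → ℝ, ClassKL β ∧
    ∀ γ ∈ S, ∀ t0 : ℝ, 0 ≤ t0 → ∀ z0 : ℝ, 0 ≤ z0 → ∀ (T : EReal) (z : ℝ → ℝ),
      IsCompSol p φ ψ γ t0 T z0 z →
        ∀ t : ℝ, t0 ≤ t → (t : EReal) < T →
          z t ≤ β z0 (t - t0 + (impCnt γ t0 t : ℝ))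

/-- `S` is uniformly incrementally bounded (UIB). -/
def UIB (S : Set (Set ℝ)) : Prop :=
  ∃ φ₀ : ℝ → ℝ, ContinuousOn φ₀ (Set.Ioi 0) ∧ MonotoneOn φ₀ (Set.Ioi 0) ∧
    ∀ γ ∈ S, ∀ s t : ℝ, 0 ≤ s → s < t → (impCnt γ s t : ℝ) ≤ φ₀ (t - s)

/-- `M = sup_{a > 0} ∫_a^{ψ(a)} ds/φ(s)`. -/
def Mval (φ ψ : ℝ → ℝ) : ℝ :=
  sSup {y : ℝ | ∃ a : ℝ, 0 < a ∧ y = ∫ s in a..(ψ a), 1 / φ s}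

namespace ClassKL

variable {β : ℝ → ℝ → ℝ}

lemma antitone_right (hβ : ClassKL β) {r : ℝ} (hr : 0 ≤ r) {t₁ t₂ : ℝ} (ht₁ : 0 ≤ t₁)
    (h₁₂ : t₁ ≤ t₂) : β r t₂ ≤ β r t₁ := by
  obtain ⟨-, -, hmono, hdecr, -⟩ := hβ
  rcases hr.eq_or_lt with rfl | hr
  · rw [(hmono t₁ ht₁).2, (hmono t₂ (ht₁.trans h₁₂)).2]
  rcases h₁₂.eq_or_lt with rfl | h₁₂
  · rfl
  have hpos : 0 < β r t₁ := by
    simpa [(hmono t₁ ht₁).2] using (hmono t₁ ht₁).1 self_mem_Ici (mem_Ici.2 hr.le) hr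
  exact (hdecr r hr.le t₁ t₂ ht₁ h₁₂ hpos).le

lemma reparam_add_exp {h : ℝ → ℝ} (hβ : ClassKL β) (hh_cont : Continuous h) (hh_mono : Monotone h)
    (hh_nonneg : ∀ s, 0 ≤ s → 0 ≤ h s) (hh_tendsto : Tendsto h atTop atTop) :
    ClassKL (fun r s => β r (h s) + r * Real.exp (-s)) := by
  have ⟨hcont, hnonneg, hmono, _, hlim⟩ := hβ
  refine ⟨?_, ?_, fun t ht => ⟨?_, ?_⟩, ?_, fun r hr => ?_⟩
  · refine .add (hcont.comp (continuous_fst.prodMk (hh_cont.comp continuous_snd)).continuousOn ?_)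
      (by fun_prop)
    exact fun q hq => ⟨hq.1, hh_nonneg _ hq.2⟩
  · intro r t hr ht
    have := hnonneg r (h t) hr (hh_nonneg t ht)
    positivity
  · intro r₁ hr₁ r₂ hr₂ hr
    have := (hmono (h t) (hh_nonneg t ht)).1 hr₁ hr₂ hr
    have := mul_lt_mul_of_pos_right hr (Real.exp_pos (-t))
    dsimp only
    linarith
  · simp [(hmono (h t) (hh_nonneg t ht)).2]
  · intro r hr t₁ t₂ ht₁ h₁₂ hpos
    rcases hr.eq_or_lt with rfl | hr
    · simp [(hmono (h t₁) (hh_nonneg t₁ ht₁)).2] at hpos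
    have := hβ.antitone_right hr.le (hh_nonneg t₁ ht₁) (hh_mono h₁₂.le)
    have := mul_lt_mul_of_pos_left (Real.exp_lt_exp.2 (neg_lt_neg h₁₂)) hr
    dsimp only
    linarith
  · have hexp : Tendsto (fun s => r * Real.exp (-s)) atTop (nhds 0) := by
      simpa using (Real.tendsto_exp_neg_atTop_nhds_zero.const_mul r)
    simpa using ((hlim r hr).comp hh_tendsto).add hexp

end ClassKL

section Gauge

variable {φ₀ : ℝ → ℝ}

def uibGauge (φ₀ : ℝ → ℝ) (u : ℝ) : ℝ := u + max (φ₀ u) 0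

/-- Generalized inverse of `uibGauge φ₀` on `(0, ∞)`, extended by the identity on `(-∞, 0]`
so that it is surjective. -/
def uibGaugeInv (φ₀ : ℝ → ℝ) (s : ℝ) : ℝ :=
  if s ≤ 0 then s else sInf {u : ℝ | 0 < u ∧ s ≤ uibGauge φ₀ u}

lemma le_uibGauge (u : ℝ) : u ≤ uibGauge φ₀ u :=
  le_add_of_nonneg_right (le_max_right _ _)

lemma uibGauge_strictMonoOn (hm : MonotoneOn φ₀ (Ioi 0)) : StrictMonoOn (uibGauge φ₀) (Ioi 0) :=
  fun _ hu _ hv huv => add_lt_add_of_lt_of_le huv (max_le_max_right 0 (hm hu hv huv.le))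

lemma uibGaugeInv_set_nonempty (s : ℝ) : {u : ℝ | 0 < u ∧ s ≤ uibGauge φ₀ u}.Nonempty :=
  ⟨max s 1, lt_max_of_lt_right one_pos, (le_max_left s 1).trans (le_uibGauge _)⟩

lemma uibGaugeInv_set_bddBelow (s : ℝ) : BddBelow {u : ℝ | 0 < u ∧ s ≤ uibGauge φ₀ u} :=
  ⟨0, fun _ hu => hu.1.le⟩

lemma uibGaugeInv_zero : uibGaugeInv φ₀ 0 = 0 := by
  simp [uibGaugeInv]

lemma uibGaugeInv_nonneg {s : ℝ} (hs : 0 ≤ s) : 0 ≤ uibGaugeInv φ₀ s := by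
  unfold uibGaugeInv
  split_ifs
  · exact hs
  · exact le_csInf (uibGaugeInv_set_nonempty s) fun _ hu => hu.1.le

lemma uibGaugeInv_le {u s : ℝ} (hu : 0 < u) (hs : s ≤ uibGauge φ₀ u) : uibGaugeInv φ₀ s ≤ u := by
  unfold uibGaugeInv
  split_ifs with h
  · linarith
  · exact csInf_le (uibGaugeInv_set_bddBelow s) ⟨hu, hs⟩

lemma le_uibGaugeInv (hm : MonotoneOn φ₀ (Ioi 0)) {u s : ℝ} (hs : uibGauge φ₀ u < s) (hu : 0 < u) :
    u ≤ uibGaugeInv φ₀ s := by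
  have hs0 : 0 < s := hu.trans_le (le_uibGauge u) |>.trans hs
  rw [uibGaugeInv, if_neg hs0.not_ge]
  refine le_csInf (uibGaugeInv_set_nonempty s) fun v hv => ?_
  by_contra! hvu
  exact (hv.2.trans_lt (uibGauge_strictMonoOn hm hv.1 hu hvu)).not_ge hs.le

lemma monotone_uibGaugeInv : Monotone (uibGaugeInv φ₀) := by
  intro s s' hss'
  unfold uibGaugeInv
  split_ifs with h h'
  · exact hss'
  · exact h.trans (le_csInf (uibGaugeInv_set_nonempty s') fun _ hu => hu.1.le)
  · linarith
  · exact csInf_le_csInf (uibGaugeInv_set_bddBelow s) (uibGaugeInv_set_nonempty s')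
      fun _ hu => ⟨hu.1, hss'.trans hu.2⟩

lemma uibGaugeInv_uibGauge (hm : MonotoneOn φ₀ (Ioi 0)) {u : ℝ} (hu : 0 < u) :
    uibGaugeInv φ₀ (uibGauge φ₀ u) = u := by
  refine le_antisymm (uibGaugeInv_le hu le_rfl) ?_
  rw [uibGaugeInv, if_neg (hu.trans_le (le_uibGauge u)).not_ge]
  refine le_csInf (uibGaugeInv_set_nonempty _) fun v hv => ?_
  by_contra! hvu
  exact (hv.2.trans_lt (uibGauge_strictMonoOn hm hv.1 hu hvu)).false

lemma surjective_uibGaugeInv (hm : MonotoneOn φ₀ (Ioi 0)) : Function.Surjective (uibGaugeInv φ₀) := by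
  intro y
  rcases le_or_gt y 0 with hy | hy
  · exact ⟨y, if_pos hy⟩
  · exact ⟨uibGauge φ₀ y, uibGaugeInv_uibGauge hm hy⟩

lemma continuous_uibGaugeInv (hm : MonotoneOn φ₀ (Ioi 0)) : Continuous (uibGaugeInv φ₀) :=
  monotone_uibGaugeInv.continuous_of_surjective (surjective_uibGaugeInv hm)

lemma tendsto_uibGaugeInv_atTop (hm : MonotoneOn φ₀ (Ioi 0)) :
    Tendsto (uibGaugeInv φ₀) atTop atTop := by
  refine tendsto_atTop.2 fun b => ?_
  have hb : 0 < max b 1 := lt_max_of_lt_right one_pos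
  filter_upwards [eventually_gt_atTop (uibGauge φ₀ (max b 1))] with s hs
  exact (le_max_left b 1).trans (le_uibGaugeInv hm hs hb)

lemma uibGaugeInv_sub_add_impCnt_le {γ : Set ℝ}
    (hγ : ∀ s t : ℝ, 0 ≤ s → s < t → (impCnt γ s t : ℝ) ≤ φ₀ (t - s))
    {t₀ t : ℝ} (ht₀ : 0 ≤ t₀) (ht : t₀ ≤ t) :
    uibGaugeInv φ₀ (t - t₀ + impCnt γ t₀ t) ≤ t - t₀ := by
  rcases ht.eq_or_lt with rfl | ht
  · simp [impCnt, uibGaugeInv_zero]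
  refine uibGaugeInv_le (sub_pos.2 ht) ?_
  have := hγ t₀ t ht₀ ht
  unfold uibGauge
  linarith [le_max_left (φ₀ (t - t₀)) 0]

end Gauge

variable {p φ ψ : ℝ → ℝ} {S : Set (Set ℝ)}

lemma StrongGUAS.weakGUAS (h : StrongGUAS p φ ψ S) : WeakGUAS p φ ψ S := by
  obtain ⟨β, hβ, hbound⟩ := h
  refine ⟨β, hβ, fun γ hγ t₀ ht₀ z₀ hz₀ T z hz t ht htT => ?_⟩
  refine (hbound γ hγ t₀ ht₀ z₀ hz₀ T z hz t ht htT).trans ?_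
  exact hβ.antitone_right hz₀ (sub_nonneg.2 ht) (le_add_of_nonneg_right (Nat.cast_nonneg _))

lemma WeakGUAS.strongGUAS_of_uib (h : WeakGUAS p φ ψ S) (hS : UIB S) : StrongGUAS p φ ψ S := by
  obtain ⟨β, hβ, hbound⟩ := h
  obtain ⟨φ₀, -, hφ₀_mono, hφ₀_bound⟩ := hS
  refine ⟨fun r s => β r (uibGaugeInv φ₀ s) + r * Real.exp (-s),
    hβ.reparam_add_exp (continuous_uibGaugeInv hφ₀_mono) monotone_uibGaugeInv
      (fun _ => uibGaugeInv_nonneg) (tendsto_uibGaugeInv_atTop hφ₀_mono),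
    fun γ hγ t₀ ht₀ z₀ hz₀ T z hz t ht htT => ?_⟩
  have hs : 0 ≤ t - t₀ + impCnt γ t₀ t := add_nonneg (sub_nonneg.2 ht) (Nat.cast_nonneg _)
  calc z t ≤ β z₀ (t - t₀) := hbound γ hγ t₀ ht₀ z₀ hz₀ T z hz t ht htT
    _ ≤ β z₀ (uibGaugeInv φ₀ (t - t₀ + impCnt γ t₀ t)) :=
      hβ.antitone_right hz₀ (uibGaugeInv_nonneg hs)
        (uibGaugeInv_sub_add_impCnt_le (hφ₀_bound γ hγ) ht₀ ht)
    _ ≤ _ := le_add_of_nonneg_right (by positivity)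

theorem strongGUAS_iff_weakGUAS_general (φ ψ p : ℝ → ℝ)
    (S : Set (Set ℝ)) (hUIB : UIB S) :
    StrongGUAS p φ ψ S ↔ WeakGUAS p φ ψ S :=
  ⟨StrongGUAS.weakGUAS, fun h => h.strongGUAS_of_uib hUIB⟩

/-- Lemma 2: if `φ, ψ` are of class `P`, `p` is nonnegative and locally integrable and
`S ⊆ Γ` is UIB, then the comparison system is strongly GUAS uniformly over `S` if and only
if it is weakly GUAS uniformly over `S`. -/
theorem strongGUAS_iff_weakGUAS (φ ψ p : ℝ → ℝ) (hφ : ClassP φ) (hψ : ClassP ψ)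
    (hp : LocIntNN p) (S : Set (Set ℝ)) (hS : ∀ γ ∈ S, IsImpulseSeq γ) (hUIB : UIB S) :
    StrongGUAS p φ ψ S ↔ WeakGUAS p φ ψ S :=
  strongGUAS_iff_weakGUAS_general φ ψ p S hUIB
end
end
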